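/- arXiv:1508.00403 — 2 statements merged into one kernel-verified Lean document; each statement's English description precedes it below -/
import Mathlib

section
/- The set {001, 010, 011, 101} is a 1-identifying code in the undirected binary de Bruijn graph B(2,3). -/
/-- The undirected de Bruijn graph `B(d,n)`: vertices are strings of length `n`
over the alphabet `{0, ..., d-1}`, and two distinct strings `x`, `y` are adjacent
iff `x_{i+1} = y_i` for all valid `i`, or `y_{i+1} = x_i` for all valid `i`. -/
def deBruijnGraph (d n : ℕ) : SimpleGraph (Fin n → Fin d) where
  Adj x y := x ≠ y ∧
    ((∀ i : Fin n, ∀ h : (i : ℕ) + 1 < n, x ⟨(i : ℕ) + 1, h⟩ = y i) ∨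
     (∀ i : Fin n, ∀ h : (i : ℕ) + 1 < n, y ⟨(i : ℕ) + 1, h⟩ = x i))
  symm := ⟨fun x y ⟨hxy, h⟩ => ⟨hxy.symm, h.symm⟩⟩
  loopless := ⟨fun x ⟨hxx, _⟩ => hxx rfl⟩

/-- The ball of radius `t` around a vertex `x`. -/
def ball {V : Type*} (G : SimpleGraph V) (t : ℕ) (x : V) : Set V :=
  {y | G.dist x y ≤ t}

/-- A set `S` of vertices is a `t`-identifying code if every ball of radius `t`
meets `S`, and distinct vertices have distinct identifying sets `B_t(x) ∩ S`. -/
def IsIdentifyingCode {V : Type*} (G : SimpleGraph V) (t : ℕ) (S : Set V) : Prop :=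
  (∀ x : V, (ball G t x ∩ S).Nonempty) ∧
  ∀ x y : V, x ≠ y → ball G t x ∩ S ≠ ball G t y ∩ S

/-!
The de Bruijn graph `B(d,n)` is connected, so a ball of radius one is a closed neighbourhood and
both conditions of an identifying code become a finite check over the eight vertices of `B(2,3)`.
-/

instance (d n : ℕ) : DecidableRel (deBruijnGraph d n).Adj := fun x y =>
  inferInstanceAs (Decidable (x ≠ y ∧
    ((∀ i : Fin n, ∀ h : (i : ℕ) + 1 < n, x ⟨(i : ℕ) + 1, h⟩ = y i) ∨
     (∀ i : Fin n, ∀ h : (i : ℕ) + 1 < n, y ⟨(i : ℕ) + 1, h⟩ = x i))))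

def window {α : Type*} {m n : ℕ} (w : Fin m → α) (k : ℕ) (hk : k + n ≤ m) : Fin n → α :=
  fun i => w ⟨k + i, by omega⟩

section deBruijn

variable {d m n : ℕ}

lemma deBruijnGraph_reachable_window_succ (w : Fin m → Fin d) (k : ℕ) (hk : k + 1 + n ≤ m) :
    (deBruijnGraph d n).Reachable (window w k (by omega)) (window w (k + 1) hk) := by
  by_cases h : window w k (by omega) = window w (k + 1) hk
  · rw [h]
  · refine SimpleGraph.Adj.reachable ⟨h, Or.inl fun i hi => ?_⟩
    simp only [window]
    congr 1
    ext
    simp only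
    omega

lemma deBruijnGraph_reachable_window (w : Fin m → Fin d) (k : ℕ) (hk : k + n ≤ m) :
    (deBruijnGraph d n).Reachable (window w 0 (by omega)) (window w k hk) := by
  induction k with
  | zero => rfl
  | succ k ih => exact (ih (by omega)).trans (deBruijnGraph_reachable_window_succ w k hk)

/-- Sliding a window of length `n` along the word `x ++ y` walks from `x` to `y`. -/
theorem deBruijnGraph_preconnected : (deBruijnGraph d n).Preconnected := fun x y => by
  have h := deBruijnGraph_reachable_window (Fin.append x y) n le_rfl
  have hx : window (Fin.append x y) 0 (by omega) = x := by
    funext i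
    rw [window, ← Fin.append_left x y i]
    congr 1
    ext
    simp
  have hy : window (Fin.append x y) n le_rfl = y := funext (Fin.append_right x y)
  rwa [hx, hy] at h

end deBruijn

section IdentifyingCode

variable {V : Type*} {G : SimpleGraph V}

/-- `G.dist` is `0` between unreachable vertices, so without preconnectedness the unit ball
would also contain every vertex outside the component of `x`. -/
lemma SimpleGraph.Preconnected.mem_ball_one_iff (hG : G.Preconnected) {x y : V} :
    y ∈ _root_.ball G 1 x ↔ x = y ∨ G.Adj x y := by
  rw [_root_.ball, Set.mem_ofPred_eq, Nat.le_one_iff_eq_zero_or_eq_one, (hG x y).dist_eq_zero_iff,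
    SimpleGraph.dist_eq_one_iff_adj]

lemma SimpleGraph.Preconnected.isIdentifyingCode_one_iff (hG : G.Preconnected) (S : Set V) :
    IsIdentifyingCode G 1 S ↔ (∀ x, ∃ s ∈ S, x = s ∨ G.Adj x s) ∧
      ∀ x y, x ≠ y → ∃ s ∈ S, ¬((x = s ∨ G.Adj x s) ↔ (y = s ∨ G.Adj y s)) := by
  refine and_congr (forall_congr' fun x => ?_) (forall₂_congr fun x y => imp_congr_right fun _ => ?_)
  · simp only [Set.Nonempty, Set.mem_inter_iff, hG.mem_ball_one_iff]
    exact exists_congr fun _ => and_comm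
  · simp only [ne_eq, Set.ext_iff, Set.mem_inter_iff, hG.mem_ball_one_iff, not_forall]
    grind

end IdentifyingCode

theorem explicit_code_B23 :
    IsIdentifyingCode (deBruijnGraph 2 3) 1
      ({![0,0,1], ![0,1,0], ![0,1,1], ![1,0,1]} : Set (Fin 3 → Fin 2)) := by
  rw [deBruijnGraph_preconnected.isIdentifyingCode_one_iff]
  simp only [Set.mem_insert_iff, Set.mem_singleton_iff, exists_eq_or_imp, exists_eq_left]
  exact ⟨by decide, by decide⟩
end

section
/- Let d ≥ 3 and n ≥ 2 be integers, and let x = x_1...x_n and y = y_1...y_n be vertices of the undirected de Bruijn graph B(d,n) with d(x,y) = n. Let y_0, y_{n+1} ∈ {0,...,d-1} be arbitrary, let x_0 ∈ {0,...,d-1} \ {y_n, y_{n+1}}, and let x_{n+1} ∈ {0,...,d-1} \ {y_0, y_1}. Then in the undirected de Bruijn graph B(d, n+2), the distance between the strings x_0 x_1 ... x_n x_{n+1} and y_0 y_1 ... y_n y_{n+1} equals n+2. -/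
/-!
Every edge of `B(d, N)` shifts a string by one place. Along a walk whose cumulative shift stays
within `[-b, a]` and ends at `c`, the letters in positions `a ≤ i < N - b` are never pushed out, so
they reappear `c` places further left at the end; such a walk has length at least
`2a + 2b - |c|`, and conversely this overlap of the two ends yields a walk of that length
(shift right by `b`, left by `a + b`, right by `a - c`).

A walk of length at most `n + 1` between the extended strings thus gives an overlap. The
conditions on `x₀` and `x_{n+1}` prevent the overlap from consisting of the new end letters only,
and stripping those letters leaves an overlap of `x` and `y` whose walk has length below `n`.
-/

def ShiftAgree {α : Type*} {N : ℕ} (u v : Fin N → α) (a b : ℕ) (c : ℤ) : Prop :=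
  ∀ i j : Fin N, (j : ℤ) = i - c → a ≤ (i : ℕ) → (i : ℕ) + b < N → u i = v j

namespace ShiftAgree

variable {α : Type*} {N : ℕ} {u v w : Fin N → α} {a b a' b' : ℕ} {c c' : ℤ}

theorem refl (u : Fin N → α) : ShiftAgree u u 0 0 0 :=
  fun _ _ hij _ _ => congrArg u (Fin.ext (by omega))

theorem eq_of_zero (h : ShiftAgree u v 0 0 0) : u = v :=
  funext fun i => h i i (by simp) (Nat.zero_le _) (by omega)

theorem mono (h : ShiftAgree u v a b c) (ha : a ≤ a') (hb : b ≤ b') : ShiftAgree u v a' b' c :=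
  fun i j hij hi hi' => h i j hij (ha.trans hi) (by omega)

theorem symm (h : ShiftAgree u v a b c) (ha : (a : ℤ) - c ≤ a') (hb : (b : ℤ) + c ≤ b') :
    ShiftAgree v u a' b' (-c) :=
  fun j i hji _ _ => (h i j (by omega) (by omega) (by omega)).symm

theorem trans {A B : ℕ} (h₁ : ShiftAgree u v a b c) (h₂ : ShiftAgree v w a' b' c')
    (ha : a ≤ A) (ha' : (a' : ℤ) + c ≤ A) (hb : b ≤ B) (hb' : (b' : ℤ) - c ≤ B) :
    ShiftAgree u w A B (c + c') := by
  intro i k hik hi hi'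
  have hj : ((i : ℤ) - c).toNat < N := by omega
  exact (h₁ i ⟨_, hj⟩ (by simp; omega) (by omega) (by omega)).trans
    (h₂ _ k (by simp; omega) (by simp; omega) (by simp; omega))

section Extension

variable {n : ℕ} {x y : Fin n → α} {x₀ xₙ y₀ yₙ : α}

theorem of_snoc_cons
    (h : ShiftAgree (Fin.snoc (Fin.cons x₀ x) xₙ : Fin (n + 2) → α)
      (Fin.snoc (Fin.cons y₀ y) yₙ) a b c) :
    ShiftAgree x y (a - 1) (b - 1) c := by
  intro i j hij hi hi'
  simpa only [Fin.snoc_castSucc, Fin.cons_succ] using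
    h i.succ.castSucc j.succ.castSucc (by simp; omega) (by simp; omega) (by simp; omega)

theorem neg_lt_of_snoc_cons (hn : 0 < n)
    (h : ShiftAgree (Fin.snoc (Fin.cons x₀ x) xₙ : Fin (n + 2) → α)
      (Fin.snoc (Fin.cons y₀ y) yₙ) 0 b c)
    (hb : b < n + 2) (hbc : -(b : ℤ) ≤ c) (h₁ : x₀ ≠ y ⟨n - 1, by omega⟩) (h₂ : x₀ ≠ yₙ) :
    -c < n := by
  by_contra! hc
  have hx₀ := h (Fin.castSucc 0)
  simp only [Fin.snoc_castSucc, Fin.cons_zero] at hx₀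
  rcases (show -c = n ∨ -c = n + 1 by omega) with hc | hc
  · refine h₁ ?_
    simpa only [Fin.snoc_castSucc, Fin.cons_succ] using
      hx₀ (⟨n - 1, by omega⟩ : Fin n).succ.castSucc (by simp; omega) le_rfl (by simp; omega)
  · refine h₂ ?_
    simpa only [Fin.snoc_last] using
      hx₀ (Fin.last _) (by simp; omega) le_rfl (by simp; omega)

theorem lt_of_snoc_cons (hn : 0 < n)
    (h : ShiftAgree (Fin.snoc (Fin.cons x₀ x) xₙ : Fin (n + 2) → α)
      (Fin.snoc (Fin.cons y₀ y) yₙ) a 0 c)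
    (ha : a < n + 2) (hca : c ≤ a) (h₁ : xₙ ≠ y₀) (h₂ : xₙ ≠ y ⟨0, hn⟩) :
    c < n := by
  by_contra! hc
  have hxₙ := h (Fin.last _)
  simp only [Fin.snoc_last] at hxₙ
  rcases (show c = n ∨ c = n + 1 by omega) with hc | hc
  · refine h₂ ?_
    simpa only [Fin.snoc_castSucc, Fin.cons_succ] using
      hxₙ (⟨0, hn⟩ : Fin n).succ.castSucc (by simp; omega) (by simp; omega) (by simp)
  · refine h₁ ?_
    simpa only [Fin.snoc_castSucc, Fin.cons_zero] using
      hxₙ (Fin.castSucc 0) (by simp; omega) (by simp; omega) (by simp)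

end Extension

end ShiftAgree

namespace deBruijnGraph

variable {d N : ℕ} {u v : Fin N → Fin d}

theorem adj_iff_shiftAgree :
    (deBruijnGraph d N).Adj u v ↔ u ≠ v ∧ (ShiftAgree u v 0 0 1 ∨ ShiftAgree u v 0 0 (-1)) := by
  have left : (∀ i : Fin N, ∀ h : (i : ℕ) + 1 < N, u ⟨i + 1, h⟩ = v i) ↔
      ShiftAgree u v 0 0 1 := by
    refine ⟨fun h i j hij _ _ => ?_, fun h i hi => h _ _ (by simp) (Nat.zero_le _) (by simpa)⟩
    exact (congrArg u (Fin.ext (by simp; omega))).trans (h j (by omega))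
  have right : (∀ i : Fin N, ∀ h : (i : ℕ) + 1 < N, v ⟨i + 1, h⟩ = u i) ↔
      ShiftAgree u v 0 0 (-1) := by
    refine ⟨fun h i j hij _ _ => ?_,
      fun h i hi => (h _ _ (by simp) (Nat.zero_le _) (by omega)).symm⟩
    exact (h i (by omega)).symm.trans (congrArg v (Fin.ext (by simp; omega)))
  exact and_congr_right fun _ => or_congr left right

theorem exists_walk_of_shiftAgree_zero (t : ℕ) (h : ShiftAgree u v 0 0 t) :
    ∃ p : (deBruijnGraph d N).Walk u v, p.length ≤ t := by
  induction t generalizing u with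
  | zero =>
    obtain rfl := h.eq_of_zero
    exact ⟨.nil, le_rfl⟩
  | succ t ih =>
    let w : Fin N → Fin d := fun i =>
      if hi : (i : ℕ) + 1 < N then u ⟨i + 1, hi⟩ else v ⟨i - t, by omega⟩
    have huw : ShiftAgree u w 0 0 1 := by
      intro i j hij _ _
      simp only [w, dif_pos (show (j : ℕ) + 1 < N by omega)]
      exact congrArg u (Fin.ext (by simp; omega))
    have hwv : ShiftAgree w v 0 0 t := by
      intro i j hij _ _
      simp only [w]
      split_ifs with hi
      · exact h _ _ (by simp; omega) (Nat.zero_le _) (by simpa using hi)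
      · exact congrArg v (Fin.ext (by simp; omega))
    obtain ⟨p, hp⟩ := ih hwv
    rcases eq_or_ne u w with heq | hne
    · exact ⟨p.copy heq.symm rfl, by simp; omega⟩
    · exact ⟨.cons (adj_iff_shiftAgree.2 ⟨hne, .inl huw⟩) p, by simp; omega⟩

theorem exists_walk_length_le (u v : Fin N → Fin d) :
    ∃ p : (deBruijnGraph d N).Walk u v, p.length ≤ N :=
  exists_walk_of_shiftAgree_zero N fun _ _ hij _ _ => absurd hij (by omega)

theorem exists_walk_of_shiftAgree_natCast {a b c : ℕ} (hab : a + b < N) (hca : c ≤ a)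
    (h : ShiftAgree u v a b c) :
    ∃ p : (deBruijnGraph d N).Walk u v, p.length + c ≤ 2 * a + 2 * b := by
  -- `z₁` is `u` shifted right by `b`, and `v` is `z₂` shifted right by `a - c`
  let z₁ : Fin N → Fin d := fun i => u ⟨i - b, by omega⟩
  let z₂ : Fin N → Fin d := fun i => v ⟨min (i + (a - c)) (N - 1), by omega⟩
  obtain ⟨p₁, hp₁⟩ := exists_walk_of_shiftAgree_zero (u := z₁) (v := u) b
    fun i j hij _ _ => congrArg u (Fin.ext (by simp; omega))
  obtain ⟨p₂, hp₂⟩ := exists_walk_of_shiftAgree_zero (u := z₁) (v := z₂) (a + b)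
    fun i j hij _ _ => h _ _ (by simp; omega) (by simp; omega) (by simp; omega)
  obtain ⟨p₃, hp₃⟩ := exists_walk_of_shiftAgree_zero (u := v) (v := z₂) (a - c)
    fun i j hij _ _ => congrArg v (Fin.ext (by simp; omega))
  exact ⟨p₁.reverse.append (p₂.append p₃.reverse), by simp; omega⟩

theorem exists_walk_of_shiftAgree {a b : ℕ} {c : ℤ} (hab : a + b < N) (hca : c ≤ a)
    (hbc : -(b : ℤ) ≤ c) (h : ShiftAgree u v a b c) :
    ∃ p : (deBruijnGraph d N).Walk u v, p.length + c.natAbs ≤ 2 * a + 2 * b := by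
  obtain ⟨t, rfl | rfl⟩ := c.eq_nat_or_neg
  · simpa using exists_walk_of_shiftAgree_natCast (c := t) hab (by omega) h
  · have h' : ShiftAgree v u (a + t) (b - t) t := by simpa using h.symm (by omega) (by omega)
    obtain ⟨p, hp⟩ := exists_walk_of_shiftAgree_natCast (by omega) (by omega) h'
    exact ⟨p.reverse, by simp; omega⟩

theorem exists_shiftAgree_of_walk (p : (deBruijnGraph d N).Walk u v) :
    ∃ (a b : ℕ) (c : ℤ), -(b : ℤ) ≤ c ∧ c ≤ a ∧ 2 * a + 2 * b ≤ p.length + c.natAbs ∧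
      ShiftAgree u v a b c := by
  induction p with
  | nil => exact ⟨0, 0, 0, le_rfl, le_rfl, le_rfl, .refl _⟩
  | cons hadj p ih =>
    obtain ⟨a, b, c, hbc, hca, hlen, h⟩ := ih
    rcases (adj_iff_shiftAgree.1 hadj).2 with hstep | hstep
    · exact ⟨a + 1, b - 1, 1 + c, by omega, by omega, by simp; omega,
        hstep.trans h (by omega) (by omega) (by omega) (by omega)⟩
    · exact ⟨a - 1, b + 1, -1 + c, by omega, by omega, by simp; omega,
        hstep.trans h (by omega) (by omega) (by omega) (by omega)⟩

end deBruijnGraph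

theorem dist_extension (d n : ℕ) (hn : 2 ≤ n)
    (x y : Fin n → Fin d) (hxy : (deBruijnGraph d n).dist x y = n)
    (y0 yn1 x0 xn1 : Fin d)
    (hx0a : x0 ≠ y ⟨n - 1, by omega⟩) (hx0b : x0 ≠ yn1)
    (hxn1a : xn1 ≠ y0) (hxn1b : xn1 ≠ y ⟨0, by omega⟩) :
    (deBruijnGraph d (n + 2)).dist (Fin.snoc (Fin.cons x0 x) xn1)
      (Fin.snoc (Fin.cons y0 y) yn1) = n + 2 := by
  set x' : Fin (n + 2) → Fin d := Fin.snoc (Fin.cons x0 x) xn1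
  set y' : Fin (n + 2) → Fin d := Fin.snoc (Fin.cons y0 y) yn1
  obtain ⟨p₀, hp₀⟩ := deBruijnGraph.exists_walk_length_le x' y'
  refine le_antisymm ((SimpleGraph.dist_le p₀).trans hp₀) (not_lt.1 fun hlt => ?_)
  obtain ⟨p, hp⟩ := SimpleGraph.Reachable.exists_walk_length_eq_dist ⟨p₀⟩
  obtain ⟨a, b, c, hbc, hca, hlen, h⟩ := deBruijnGraph.exists_shiftAgree_of_walk p
  have hhead : a = 0 → -c < n := fun ha => by
    subst ha; exact h.neg_lt_of_snoc_cons (by omega) (by omega) hbc hx0a hx0b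
  have htail : b = 0 → c < n := fun hb => by
    subst hb; exact h.lt_of_snoc_cons (by omega) (by omega) hca hxn1a hxn1b
  obtain ⟨q, hq⟩ := deBruijnGraph.exists_walk_of_shiftAgree (a := max (a - 1) c.toNat)
    (b := max (b - 1) (-c).toNat) (by omega) (by omega) (by omega)
    (h.of_snoc_cons.mono (le_max_left _ _) (le_max_left _ _))
  have hq_len : n ≤ q.length := hxy.symm.trans_le (SimpleGraph.dist_le q)
  omega
end
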